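/- For λ ≠ 0 and α = ω²/(2λ), for each i ≠ j the function S̃_{ij}(q,p) = pᵢpⱼ − 2λ qᵢqⱼ H̃(q,p) Poisson-commutes with H̃ = (p² − 2α)/(2(1+λq²)). -/

import Mathlib

open Filter Topology

noncomputable def pbracket {N : ℕ} (F G : (Fin N → ℝ) → (Fin N → ℝ) → ℝ)
    (q p : Fin N → ℝ) : ℝ :=
  ∑ k, (deriv (fun t => F (Function.update q k t) p) (q k)
          * deriv (fun t => G q (Function.update p k t)) (p k)
        - deriv (fun t => F q (Function.update p k t)) (p k)
          * deriv (fun t => G (Function.update q k t) p) (q k))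

noncomputable def Htil {N : ℕ} (lam α : ℝ) (q p : Fin N → ℝ) : ℝ :=
  ((∑ i, p i ^ 2) - 2 * α) / (2 * (1 + lam * ∑ i, q i ^ 2))

lemma sum_sq_update {N : ℕ} (f : Fin N → ℝ) (k : Fin N) (t : ℝ) :
    ∑ m, (Function.update f k t m) ^ 2 = (∑ m, f m ^ 2) - f k ^ 2 + t ^ 2 := by
  have h1 : ∀ g : Fin N → ℝ, ∑ m, g m ^ 2
      = g k ^ 2 + ∑ m ∈ Finset.univ.erase k, g m ^ 2 :=
    fun g => (Finset.add_sum_erase _ (fun m => g m ^ 2) (Finset.mem_univ k)).symm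
  have h2 : ∑ m ∈ Finset.univ.erase k, (Function.update f k t m) ^ 2
      = ∑ m ∈ Finset.univ.erase k, f m ^ 2 :=
    Finset.sum_congr rfl fun m hm => by
      rw [Function.update_of_ne (Finset.ne_of_mem_erase hm)]
  rw [h1, h1 f, h2, Function.update_self]
  ring

lemma hasDerivAt_Hq {N : ℕ} (lam α : ℝ) (q p : Fin N → ℝ) (k : Fin N)
    (h : 1 + lam * ∑ m, q m ^ 2 ≠ 0) :
    HasDerivAt (fun t => Htil lam α (Function.update q k t) p)
      (-(((∑ m, p m ^ 2) - 2 * α) * lam * q k) / (1 + lam * ∑ m, q m ^ 2) ^ 2) (q k) := by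
  have heq : (fun t => Htil lam α (Function.update q k t) p)
      = fun t => ((∑ m, p m ^ 2) - 2 * α)
          / (2 * (1 + lam * ((∑ m, q m ^ 2) - q k ^ 2 + t ^ 2))) := by
    funext t
    simp only [Htil, sum_sq_update]
  have h1 : HasDerivAt (fun t : ℝ => t ^ 2) (2 * q k) (q k) := by
    simpa using hasDerivAt_pow 2 (q k)
  have hg : HasDerivAt (fun t : ℝ => 2 * (1 + lam * ((∑ m, q m ^ 2) - q k ^ 2 + t ^ 2)))
      (2 * (lam * (2 * q k))) (q k) :=
    (((h1.const_add _).const_mul lam).const_add 1).const_mul 2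
  have hgv : 2 * (1 + lam * ((∑ m, q m ^ 2) - q k ^ 2 + q k ^ 2))
      = 2 * (1 + lam * ∑ m, q m ^ 2) := by ring
  have hne : 2 * (1 + lam * ((∑ m, q m ^ 2) - q k ^ 2 + q k ^ 2)) ≠ 0 := by
    rw [hgv]; exact mul_ne_zero two_ne_zero h
  have hd := (hasDerivAt_const (q k) ((∑ m, p m ^ 2) - 2 * α)).div hg hne
  rw [heq]
  refine hd.congr_deriv ?_
  rw [hgv]
  field_simp
  ring

lemma hasDerivAt_Hp {N : ℕ} (lam α : ℝ) (q p : Fin N → ℝ) (k : Fin N)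
    (h : 1 + lam * ∑ m, q m ^ 2 ≠ 0) :
    HasDerivAt (fun t => Htil lam α q (Function.update p k t))
      (p k / (1 + lam * ∑ m, q m ^ 2)) (p k) := by
  have heq : (fun t => Htil lam α q (Function.update p k t))
      = fun t => ((∑ m, p m ^ 2) - p k ^ 2 + t ^ 2 - 2 * α)
          / (2 * (1 + lam * ∑ m, q m ^ 2)) := by
    funext t
    simp only [Htil, sum_sq_update]
  have h1 : HasDerivAt (fun t : ℝ => t ^ 2) (2 * p k) (p k) := by
    simpa using hasDerivAt_pow 2 (p k)
  have hd := ((h1.const_add ((∑ m, p m ^ 2) - p k ^ 2)).sub_const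
      (2 * α)).div_const (2 * (1 + lam * ∑ m, q m ^ 2))
  rw [heq]
  refine hd.congr_deriv ?_
  field_simp

lemma hasDerivAt_update_apply {N : ℕ} (f : Fin N → ℝ) (k m : Fin N) (t0 : ℝ) :
    HasDerivAt (fun t => Function.update f k t m) (if m = k then 1 else 0) t0 := by
  rcases eq_or_ne m k with rfl | hne
  · simpa [Function.update_self] using hasDerivAt_id' t0
  · simpa [Function.update_of_ne hne, hne] using hasDerivAt_const t0 (f m)
theorem stmt_8 {N : ℕ} (lam om α : ℝ) (hα : 2 * lam * α = om ^ 2)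
    (i j : Fin N) (hij : i ≠ j) (q p : Fin N → ℝ)
    (h : 1 + lam * ∑ k, q k ^ 2 ≠ 0) :
    pbracket
      (fun q p => p i * p j - 2 * lam * (q i * q j) * Htil lam α q p)
      (Htil lam α) q p = 0 := by
  have key : ∀ k : Fin N,
      deriv (fun t => p i * p j
          - 2 * lam * (Function.update q k t i * Function.update q k t j)
            * Htil lam α (Function.update q k t) p) (q k)
        * deriv (fun t => Htil lam α q (Function.update p k t)) (p k)
      - deriv (fun t => Function.update p k t i * Function.update p k t j
          - 2 * lam * (q i * q j) * Htil lam α q (Function.update p k t)) (p k)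
        * deriv (fun t => Htil lam α (Function.update q k t) p) (q k)
      = (if i = k then lam * ((∑ m, p m ^ 2) - 2 * α) * (q i * p j - q j * p i)
            / (1 + lam * ∑ m, q m ^ 2) ^ 2 else 0)
        + (if j = k then -(lam * ((∑ m, p m ^ 2) - 2 * α) * (q i * p j - q j * p i)
            / (1 + lam * ∑ m, q m ^ 2) ^ 2) else 0) := by
    intro k
    have hHq := hasDerivAt_Hq lam α q p k h
    have hHp := hasDerivAt_Hp lam α q p k h
    have hFq : HasDerivAt (fun t => p i * p j
        - 2 * lam * (Function.update q k t i * Function.update q k t j)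
          * Htil lam α (Function.update q k t) p)
        (-((2 * lam * ((if i = k then 1 else 0) * q j + q i * (if j = k then 1 else 0)))
            * Htil lam α q p
          + 2 * lam * (q i * q j)
            * (-(((∑ m, p m ^ 2) - 2 * α) * lam * q k)
                / (1 + lam * ∑ m, q m ^ 2) ^ 2))) (q k) := by
      have hd := ((((hasDerivAt_update_apply q k i (q k)).mul
          (hasDerivAt_update_apply q k j (q k))).const_mul
          (2 * lam)).mul hHq).const_sub (p i * p j)
      refine hd.congr_deriv ?_
      simp [Function.update_eq_self]
    have hFp : HasDerivAt (fun t => Function.update p k t i * Function.update p k t j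
        - 2 * lam * (q i * q j) * Htil lam α q (Function.update p k t))
        (((if i = k then 1 else 0) * p j + p i * (if j = k then 1 else 0))
          - 2 * lam * (q i * q j) * (p k / (1 + lam * ∑ m, q m ^ 2))) (p k) := by
      have hd := ((hasDerivAt_update_apply p k i (p k)).mul
          (hasDerivAt_update_apply p k j (p k))).sub
          (((hHp.const_mul (2 * lam * (q i * q j)))))
      refine hd.congr_deriv ?_
      simp [Function.update_eq_self]
    rw [hFq.deriv, hHp.deriv, hFp.deriv, hHq.deriv]
    simp only [Htil]
    split_ifs with h1 h2 h2
    · exact absurd (h1.trans h2.symm) hij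
    · subst h1
      field_simp
      ring
    · subst h2
      field_simp
      ring
    · field_simp
      ring
  unfold pbracket
  rw [Finset.sum_congr rfl fun k _ => key k, Finset.sum_add_distrib,
    Finset.sum_ite_eq, Finset.sum_ite_eq]
  simp
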